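/- Let N be a nonempty finite set and let f : 2^N → ℝ ∪ {-∞} be a set function whose effective domain dom f is nonempty and consists of equi-cardinal sets (|X| = |Y| for all X, Y ∈ dom f). If the conjugate function g(p) = max{ f(X) − p(X) : X ⊆ N } is submodular on ℝ^N, then f has the local exchange property: for any X, Y ∈ dom f with |X \ Y| = 2, there exist i ∈ X \ Y and j ∈ Y \ X such that f(X) + f(Y) ≤ f(X − i + j) + f(Y + i − j). -/

import Mathlib

/-!
Write `X = I ∪ {i₁, i₂}` and `Y = I ∪ {j₁, j₂}` with `I = X ∩ Y`. Give the price `-M` to `I`,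
the price `M` to the complement of `X ∪ Y`, and the prices `μ, 0, σ, τ` to `i₁, i₂, j₁, j₂`.
Since all sets of `dom f` have `|I| + 2` elements, for `M` large only the six sets `I ∪ {u, v}`
can attain the maximum defining `g`, so that up to the constant `M |I|` the conjugate is
`max (f X - μ) (A - σ) (B - τ) (f Y - σ - τ)` as a function of `(σ, τ)`, where
`A = max (f (X - i₂ + j₁) - μ) (f (Y + i₂ - j₂))` and
`B = max (f (X - i₂ + j₂) - μ) (f (Y + i₂ - j₁))`.
Submodularity of `g` on a suitable rectangle of the `(σ, τ)`-plane forces `f X - μ + f Y ≤ A + B`.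
For the least `μ` at which the second terms realise `A` and `B`, this is
`f X + f Y ≤ max (f (X - i₂ + j₁) + f (Y + i₂ - j₁)) (f (X - i₂ + j₂) + f (Y + i₂ - j₂))`.
-/

open Finset

section LocalExchange

variable {N : Type*}

section Combinatorics

variable [DecidableEq N]

theorem insert_erase_union_pair {I : Finset N} {a b c : N} (hb : b ∉ I) (hab : a ≠ b) :
    insert c ((I ∪ {a, b}).erase b) = I ∪ {a, c} := by
  ext v
  by_cases hvb : v = b
  · subst hvb; simp [hb, hab.symm]
  · simp [hvb]; tauto

theorem erase_insert_union_pair {I : Finset N} {a b c : N} (hb : b ∉ I) (hab : a ≠ b)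
    (hcb : c ≠ b) : (insert c (I ∪ {a, b})).erase b = I ∪ {c, a} := by
  ext v
  by_cases hvb : v = b
  · subst hvb; simp [hb, hab.symm, hcb.symm]
  · simp [hvb]

theorem eq_pair_of_subset_of_card_eq_two {a b c d : N} {W : Finset N}
    (hW : W ⊆ {a, b, c, d}) (h2 : W.card = 2) :
    W = {a, b} ∨ W = {a, c} ∨ W = {a, d} ∨ W = {b, c} ∨ W = {b, d} ∨ W = {c, d} := by
  obtain ⟨u, v, huv, rfl⟩ := card_eq_two.mp h2
  have hu : u ∈ ({a, b, c, d} : Finset N) := hW (by simp)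
  have hv : v ∈ ({a, b, c, d} : Finset N) := hW (by simp)
  simp only [mem_insert, mem_singleton] at hu hv
  rcases hu with rfl | rfl | rfl | rfl <;> rcases hv with rfl | rfl | rfl | rfl <;>
    simp_all [pair_comm]

end Combinatorics

theorem WithBot.exists_coe_bounds_of_add_lt {a b : WithBot ℝ} {c : ℝ} (h : a + b < c) :
    ∃ a' b' : ℝ, a ≤ a' ∧ b ≤ b' ∧ a' + b' < c := by
  induction a using WithBot.recBotCoe with
  | bot => exact ⟨c - b.unbotD 0 - 1, b.unbotD 0, bot_le, b.le_coe_unbotD 0, by linarith⟩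
  | coe a =>
    induction b using WithBot.recBotCoe with
    | bot => exact ⟨a, c - a - 1, le_rfl, bot_le, by linarith⟩
    | coe b => exact ⟨a, b, le_rfl, le_rfl, by exact_mod_cast h⟩

theorem WithBot.exists_forall_coe_le {α : Type*} [Finite α] (f : α → WithBot ℝ) :
    ∃ F : ℝ, ∀ a (z : ℝ), f a = z → z ≤ F := by
  obtain ⟨F, hF⟩ := Finite.exists_le fun a => (f a).unbotD 0
  exact ⟨F, fun a z hz => by simpa [hz] using hF a⟩

section Conjugate

variable [Fintype N]

def IsConjugate (f : Finset N → WithBot ℝ) (g : (N → ℝ) → ℝ) : Prop :=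
  ∀ p : N → ℝ, (g p : WithBot ℝ) =
    (univ : Finset (Finset N)).sup fun X => f X + ((-(∑ i ∈ X, p i) : ℝ) : WithBot ℝ)

variable {f : Finset N → WithBot ℝ} {g : (N → ℝ) → ℝ}

theorem IsConjugate.sub_sum_le (hg : IsConjugate f g) (p : N → ℝ) {Z : Finset N} {z : ℝ}
    (hz : f Z = z) : z - ∑ i ∈ Z, p i ≤ g p := by
  have h := (le_sup (mem_univ Z)).trans_eq (hg p).symm
  rw [hz, ← WithBot.coe_add, WithBot.coe_le_coe] at h
  linarith

theorem IsConjugate.le_of_forall (hg : IsConjugate f g) {p : N → ℝ} {c : ℝ}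
    (h : ∀ Z (z : ℝ), f Z = z → z - ∑ i ∈ Z, p i ≤ c) : g p ≤ c := by
  rw [← WithBot.coe_le_coe, hg p]
  refine Finset.sup_le fun Z _ => ?_
  induction hZ : f Z using WithBot.recBotCoe with
  | bot => exact bot_le
  | coe z => exact_mod_cast (sub_eq_add_neg z _).symm.trans_le (h Z z hZ)

end Conjugate

section LocalPrice

variable [DecidableEq N]

def localPrice (I K : Finset N) (M : ℝ) (q : N → ℝ) : N → ℝ :=
  fun v => if v ∈ I then -M else if v ∈ K then q v else M

variable {I K : Finset N} {M : ℝ}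

theorem localPrice_of_mem {q : N → ℝ} {v : N} (hv : v ∈ I) : localPrice I K M q v = -M :=
  if_pos hv

theorem localPrice_of_notMem_of_mem {q : N → ℝ} {v : N} (hvI : v ∉ I) (hvK : v ∈ K) :
    localPrice I K M q v = q v := by
  simp [localPrice, hvI, hvK]

theorem localPrice_of_notMem {q : N → ℝ} {v : N} (hvI : v ∉ I) (hvK : v ∉ K) :
    localPrice I K M q v = M := by
  simp [localPrice, hvI, hvK]

theorem localPrice_sup (q q' : N → ℝ) :
    localPrice I K M (q ⊔ q') = localPrice I K M q ⊔ localPrice I K M q' := by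
  funext v
  simp only [localPrice, Pi.sup_apply]
  split_ifs <;> simp

theorem localPrice_inf (q q' : N → ℝ) :
    localPrice I K M (q ⊓ q') = localPrice I K M q ⊓ localPrice I K M q' := by
  funext v
  simp only [localPrice, Pi.inf_apply]
  split_ifs <;> simp

theorem sum_localPrice_union (q : N → ℝ) {W : Finset N} (hIK : Disjoint I K) (hW : W ⊆ K) :
    ∑ v ∈ I ∪ W, localPrice I K M q v = -(M * I.card) + ∑ v ∈ W, q v := by
  rw [sum_union (hIK.mono_right hW)]
  congr 1
  · rw [sum_congr rfl fun v hv => localPrice_of_mem hv]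
    simp [mul_comm]
  · exact sum_congr rfl fun v hv =>
      localPrice_of_notMem_of_mem (disjoint_right.mp hIK (hW hv)) (hW hv)

theorem le_sum_localPrice (q : N → ℝ) {Z : Finset N} (hM : 0 ≤ M)
    (hZ : ¬(I ⊆ Z ∧ Z ⊆ I ∪ K)) :
    -(M * I.card) + M - ∑ v ∈ K, |q v| ≤ ∑ v ∈ Z, localPrice I K M q v := by
  rw [← sum_inter_add_sum_sdiff Z I, ← sum_inter_add_sum_sdiff (Z \ I) K]
  have hI : ∑ v ∈ Z ∩ I, localPrice I K M q v = -(M * (Z ∩ I).card) := by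
    rw [sum_congr rfl fun v hv => localPrice_of_mem (mem_inter.mp hv).2]
    simp [mul_comm]
  have hK : -∑ v ∈ K, |q v| ≤ ∑ v ∈ (Z \ I) ∩ K, localPrice I K M q v := by
    rw [sum_congr rfl fun v hv =>
      localPrice_of_notMem_of_mem (mem_sdiff.mp (mem_inter.mp hv).1).2 (mem_inter.mp hv).2]
    calc -∑ v ∈ K, |q v| ≤ -∑ v ∈ (Z \ I) ∩ K, |q v| :=
          neg_le_neg (sum_le_sum_of_subset_of_nonneg inter_subset_right fun _ _ _ => abs_nonneg _)
      _ ≤ ∑ v ∈ (Z \ I) ∩ K, q v := by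
          rw [← sum_neg_distrib]; exact sum_le_sum fun v _ => neg_abs_le _
  have hout : ∑ v ∈ (Z \ I) \ K, localPrice I K M q v = M * ((Z \ I) \ K).card := by
    rw [sum_congr rfl fun v hv =>
      localPrice_of_notMem (mem_sdiff.mp (mem_sdiff.mp hv).1).2 (mem_sdiff.mp hv).2]
    simp [mul_comm]
  have hcard : (Z ∩ I).card + 1 ≤ I.card + ((Z \ I) \ K).card := by
    by_cases hIZ : I ⊆ Z
    · obtain ⟨v, hvZ, hv⟩ := not_subset.mp fun h => hZ ⟨hIZ, h⟩
      have : 0 < ((Z \ I) \ K).card :=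
        card_pos.mpr ⟨v, by simpa [hvZ] using hv⟩
      have := card_le_card (inter_subset_right (s₁ := Z) (s₂ := I))
      omega
    · have hne : Z ∩ I ≠ I := fun h => hIZ (by rw [← h]; exact inter_subset_left)
      have := card_lt_card (inter_subset_right.ssubset_of_ne hne)
      omega
  have hcard' : M * ((Z ∩ I).card + 1) ≤ M * (I.card + ((Z \ I) \ K).card) :=
    mul_le_mul_of_nonneg_left (by exact_mod_cast hcard) hM
  linarith

theorem IsConjugate.eventually_apply_localPrice_le [Fintype N] {f : Finset N → WithBot ℝ}
    {g : (N → ℝ) → ℝ} (hg : IsConjugate f g) {q : N → ℝ} {c : ℝ} {k : ℕ} (hIK : Disjoint I K)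
    (hcard : ∀ Z, f Z ≠ ⊥ → Z.card = I.card + k)
    (hwin : ∀ W ⊆ K, W.card = k → ∀ z : ℝ, f (I ∪ W) = z → z - ∑ v ∈ W, q v ≤ c) :
    ∀ᶠ M in Filter.atTop, g (localPrice I K M q) ≤ M * I.card + c := by
  obtain ⟨F, hF⟩ := WithBot.exists_forall_coe_le f
  filter_upwards [Filter.eventually_ge_atTop 0,
    Filter.eventually_ge_atTop (F - c + ∑ v ∈ K, |q v|)] with M hM0 hM
  refine hg.le_of_forall fun Z z hz => ?_
  by_cases hZ : I ⊆ Z ∧ Z ⊆ I ∪ K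
  · have hW : Z \ I ⊆ K := sdiff_le_iff.mpr hZ.2
    have hWk : (Z \ I).card = k := by
      have := hcard Z (hz ▸ WithBot.coe_ne_bot)
      rw [card_sdiff_of_subset hZ.1]
      omega
    rw [← union_sdiff_of_subset hZ.1] at hz ⊢
    rw [sum_localPrice_union q hIK hW]
    linarith [hwin _ hW hWk z hz]
  · linarith [hF Z z hz, le_sum_localPrice q hM0 hZ]

theorem IsConjugate.le_apply_localPrice [Fintype N] {f : Finset N → WithBot ℝ}
    {g : (N → ℝ) → ℝ} (hg : IsConjugate f g) (q : N → ℝ) {W : Finset N} {z : ℝ}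
    (hIK : Disjoint I K) (hW : W ⊆ K) (hz : f (I ∪ W) = z) :
    z + M * I.card - ∑ v ∈ W, q v ≤ g (localPrice I K M q) := by
  have := hg.sub_sum_le (localPrice I K M q) hz
  rw [sum_localPrice_union q hIK hW] at this
  linarith

end LocalPrice

section Exchange

variable [DecidableEq N]

def exchangeWeights (i₁ j₁ j₂ : N) (μ σ τ : ℝ) : N → ℝ :=
  fun v => if v = i₁ then μ else if v = j₁ then σ else if v = j₂ then τ else 0

variable {i₁ i₂ j₁ j₂ : N}

theorem exchangeWeights_apply (hK : [i₁, i₂, j₁, j₂].Nodup) (μ σ τ : ℝ) :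
    exchangeWeights i₁ j₁ j₂ μ σ τ i₁ = μ ∧ exchangeWeights i₁ j₁ j₂ μ σ τ i₂ = 0 ∧
      exchangeWeights i₁ j₁ j₂ μ σ τ j₁ = σ ∧ exchangeWeights i₁ j₁ j₂ μ σ τ j₂ = τ := by
  simp only [List.nodup_cons, List.mem_cons, List.not_mem_nil, or_false, List.nodup_nil,
    and_true, not_or, not_false_eq_true] at hK
  simp [exchangeWeights, Ne.symm hK.1.1, Ne.symm hK.1.2.1, Ne.symm hK.1.2.2, hK.2.1.1, hK.2.1.2,
    Ne.symm hK.2.2]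

theorem exchangeWeights_sup (μ σ τ σ' τ' : ℝ) :
    exchangeWeights i₁ j₁ j₂ μ σ τ ⊔ exchangeWeights i₁ j₁ j₂ μ σ' τ' =
      exchangeWeights i₁ j₁ j₂ μ (σ ⊔ σ') (τ ⊔ τ') := by
  funext v
  simp only [exchangeWeights, Pi.sup_apply]
  split_ifs <;> simp

theorem exchangeWeights_inf (μ σ τ σ' τ' : ℝ) :
    exchangeWeights i₁ j₁ j₂ μ σ τ ⊓ exchangeWeights i₁ j₁ j₂ μ σ' τ' =
      exchangeWeights i₁ j₁ j₂ μ (σ ⊓ σ') (τ ⊓ τ') := by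
  funext v
  simp only [exchangeWeights, Pi.inf_apply]
  split_ifs <;> simp

theorem apply_localPrice_exchangeWeights_add_le
    {g : (N → ℝ) → ℝ} {I K : Finset N} {μ M s s' t t' : ℝ}
    (hsub : ∀ p q : N → ℝ, g (p ⊔ q) + g (p ⊓ q) ≤ g p + g q)
    (hs : s' ≤ s) (ht : t' ≤ t) :
    g (localPrice I K M (exchangeWeights i₁ j₁ j₂ μ s t)) +
        g (localPrice I K M (exchangeWeights i₁ j₁ j₂ μ s' t')) ≤
      g (localPrice I K M (exchangeWeights i₁ j₁ j₂ μ s t')) +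
        g (localPrice I K M (exchangeWeights i₁ j₁ j₂ μ s' t)) := by
  have h := hsub (localPrice I K M (exchangeWeights i₁ j₁ j₂ μ s t'))
    (localPrice I K M (exchangeWeights i₁ j₁ j₂ μ s' t))
  rwa [← localPrice_sup, ← localPrice_inf, exchangeWeights_sup, exchangeWeights_inf,
    max_eq_left hs, max_eq_right ht, min_eq_right hs, min_eq_left ht] at h

variable [Fintype N] {f : Finset N → WithBot ℝ} {g : (N → ℝ) → ℝ} {I : Finset N}
  {x y a b c d μ σ τ : ℝ}

theorem IsConjugate.eventually_apply_localPrice_exchangeWeights_le (hg : IsConjugate f g)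
    (hequi : ∀ Z Z' : Finset N, f Z ≠ ⊥ → f Z' ≠ ⊥ → Z.card = Z'.card)
    (hI : Disjoint I {i₁, i₂, j₁, j₂}) (hK : [i₁, i₂, j₁, j₂].Nodup)
    (hx : f (I ∪ {i₁, i₂}) = x) (hy : f (I ∪ {j₁, j₂}) ≤ y)
    (ha : f (I ∪ {i₁, j₁}) ≤ a) (hb : f (I ∪ {i₁, j₂}) ≤ b)
    (hc : f (I ∪ {i₂, j₁}) ≤ c) (hd : f (I ∪ {i₂, j₂}) ≤ d)
    (hyστ : y - σ - τ ≤ x - μ) (haσ : a - σ ≤ x) (hbτ : b - τ ≤ x)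
    (hcσ : c - σ ≤ x - μ) (hdτ : d - τ ≤ x - μ) :
    ∀ᶠ M in Filter.atTop, g (localPrice I {i₁, i₂, j₁, j₂} M (exchangeWeights i₁ j₁ j₂ μ σ τ)) ≤
      M * I.card + (x - μ) := by
  obtain ⟨w₁, w₂, w₃, w₄⟩ := exchangeWeights_apply hK μ σ τ
  simp only [List.nodup_cons, List.mem_cons, List.not_mem_nil, or_false, List.nodup_nil,
    and_true, not_or, not_false_eq_true] at hK
  obtain ⟨⟨h₁₂, h₁₃, h₁₄⟩, ⟨h₂₃, h₂₄⟩, h₃₄⟩ := hK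
  have hcard : ∀ Z, f Z ≠ ⊥ → Z.card = I.card + 2 := fun Z hZ => by
    rw [hequi Z _ hZ (hx ▸ WithBot.coe_ne_bot),
      card_union_of_disjoint (hI.mono_right (by simp [insert_subset_iff])), card_pair h₁₂]
  refine hg.eventually_apply_localPrice_le hI hcard fun W hW hW2 z hz => ?_
  have hle : ∀ {r : ℝ}, f (I ∪ W) ≤ r → z ≤ r := fun h => WithBot.coe_le_coe.mp (hz ▸ h)
  rcases eq_pair_of_subset_of_card_eq_two hW hW2 with rfl | rfl | rfl | rfl | rfl | rfl
  · rw [sum_pair h₁₂, w₁, w₂]; linarith [hle hx.le]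
  · rw [sum_pair h₁₃, w₁, w₃]; linarith [hle ha]
  · rw [sum_pair h₁₄, w₁, w₄]; linarith [hle hb]
  · rw [sum_pair h₂₃, w₂, w₃]; linarith [hle hc]
  · rw [sum_pair h₂₄, w₂, w₄]; linarith [hle hd]
  · rw [sum_pair h₃₄, w₃, w₄]; linarith [hle hy]

theorem add_le_max_of_conj_submodular_of_le (hg : IsConjugate f g)
    (hsub : ∀ p q : N → ℝ, g (p ⊔ q) + g (p ⊓ q) ≤ g p + g q)
    (hequi : ∀ Z Z' : Finset N, f Z ≠ ⊥ → f Z' ≠ ⊥ → Z.card = Z'.card)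
    (hI : Disjoint I {i₁, i₂, j₁, j₂}) (hK : [i₁, i₂, j₁, j₂].Nodup)
    (hx : f (I ∪ {i₁, i₂}) = x) (hy : f (I ∪ {j₁, j₂}) = y)
    (ha : f (I ∪ {i₁, j₁}) ≤ a) (hb : f (I ∪ {i₁, j₂}) ≤ b)
    (hc : f (I ∪ {i₂, j₁}) ≤ c) (hd : f (I ∪ {i₂, j₂}) ≤ d) :
    x + y ≤ max (a + d) (b + c) := by
  set K : Finset N := {i₁, i₂, j₁, j₂}
  have h₁₂ : i₁ ≠ i₂ := fun h => by simp [h] at hK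
  have h₃₄ : j₁ ≠ j₂ := fun h => by simp [h] at hK
  set μ := max (b - d) (a - c)
  set w := exchangeWeights i₁ j₁ j₂ μ
  -- `s'` and `t'` make `I ∪ {i₂, j₁}` and `I ∪ {i₂, j₂}` tie with `X` at `(s', t)` and `(s, t')`;
  -- `s` and `t` are large enough that no other pair beats `X` there.
  set s' := c + μ - x
  set t' := d + μ - x
  set s := max s' (max (y - d) (a - x))
  set t := max t' (max (y - c) (b - x))
  have hs' : s' ≤ s := le_max_left _ _
  have ht' : t' ≤ t := le_max_left _ _
  have hsd : y - d ≤ s := le_max_of_le_right (le_max_left _ _)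
  have hsa : a - x ≤ s := le_max_of_le_right (le_max_right _ _)
  have htc : y - c ≤ t := le_max_of_le_right (le_max_left _ _)
  have htb : b - x ≤ t := le_max_of_le_right (le_max_right _ _)
  have hμb : b - d ≤ μ := le_max_left _ _
  have hμa : a - c ≤ μ := le_max_right _ _
  have hup₁ : ∀ᶠ M in Filter.atTop, g (localPrice I K M (w s t')) ≤ M * I.card + (x - μ) :=
    hg.eventually_apply_localPrice_exchangeWeights_le hequi hI hK hx hy.le ha hb hc hd
      (by linarith) (by linarith) (by linarith) (by linarith) (by linarith)
  have hup₂ : ∀ᶠ M in Filter.atTop, g (localPrice I K M (w s' t)) ≤ M * I.card + (x - μ) :=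
    hg.eventually_apply_localPrice_exchangeWeights_le hequi hI hK hx hy.le ha hb hc hd
      (by linarith) (by linarith) (by linarith) (by linarith) (by linarith)
  obtain ⟨M, h₁, h₂⟩ := (hup₁.and hup₂).exists
  have hsq : g (localPrice I K M (w s t)) + g (localPrice I K M (w s' t')) ≤
      g (localPrice I K M (w s t')) + g (localPrice I K M (w s' t)) :=
    apply_localPrice_exchangeWeights_add_le hsub hs' ht'
  have h₃ := hg.le_apply_localPrice (w s t) (M := M) hI (by simp [K, insert_subset_iff]) hx
  have h₄ := hg.le_apply_localPrice (w s' t') (M := M) hI (by simp [K, insert_subset_iff]) hy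
  obtain ⟨w₁, w₂, -, -⟩ := exchangeWeights_apply hK μ s t
  obtain ⟨-, -, w₃, w₄⟩ := exchangeWeights_apply hK μ s' t'
  simp only [w, sum_pair h₁₂, w₁, w₂] at h₃
  simp only [w, sum_pair h₃₄, w₃, w₄] at h₄
  calc x + y ≤ c + d + μ := by linarith
    _ = max (a + d) (b + c) := by rw [← max_add_add_left, max_comm]; congr 1 <;> ring

theorem add_le_max_of_conj_submodular (hg : IsConjugate f g)
    (hsub : ∀ p q : N → ℝ, g (p ⊔ q) + g (p ⊓ q) ≤ g p + g q)
    (hequi : ∀ Z Z' : Finset N, f Z ≠ ⊥ → f Z' ≠ ⊥ → Z.card = Z'.card)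
    (hI : Disjoint I {i₁, i₂, j₁, j₂})
    (hK : [i₁, i₂, j₁, j₂].Nodup) (hX : f (I ∪ {i₁, i₂}) ≠ ⊥) (hY : f (I ∪ {j₁, j₂}) ≠ ⊥) :
    f (I ∪ {i₁, i₂}) + f (I ∪ {j₁, j₂}) ≤
      max (f (I ∪ {i₁, j₁}) + f (I ∪ {i₂, j₂})) (f (I ∪ {i₁, j₂}) + f (I ∪ {i₂, j₁})) := by
  obtain ⟨x, hx⟩ := WithBot.ne_bot_iff_exists.mp hX
  obtain ⟨y, hy⟩ := WithBot.ne_bot_iff_exists.mp hY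
  by_contra! h
  rw [max_lt_iff, ← hx, ← hy, ← WithBot.coe_add] at h
  obtain ⟨a, d, ha, hd, had⟩ := WithBot.exists_coe_bounds_of_add_lt h.1
  obtain ⟨b, c, hb, hc, hbc⟩ := WithBot.exists_coe_bounds_of_add_lt h.2
  exact (max_lt had hbc).not_ge <| add_le_max_of_conj_submodular_of_le hg hsub hequi hI hK
    hx.symm hy.symm ha hb hc hd

theorem exists_exchange_of_conj_submodular (hg : IsConjugate f g)
    (hsub : ∀ p q : N → ℝ, g (p ⊔ q) + g (p ⊓ q) ≤ g p + g q)
    (hequi : ∀ Z Z' : Finset N, f Z ≠ ⊥ → f Z' ≠ ⊥ → Z.card = Z'.card)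
    {X Y : Finset N} (hXY : X \ Y = {i₁, i₂}) (hYX : Y \ X = {j₁, j₂})
    (hi : i₁ ≠ i₂) (hj : j₁ ≠ j₂) (hX : f X ≠ ⊥) (hY : f Y ≠ ⊥) :
    ∃ j ∈ Y \ X, f X + f Y ≤ f (insert j (X.erase i₂)) + f ((insert i₂ Y).erase j) := by
  have hi₁ : i₁ ∈ X \ Y := hXY ▸ mem_insert_self i₁ {i₂}
  have hi₂ : i₂ ∈ X \ Y := hXY ▸ mem_insert_of_mem (mem_singleton_self i₂)
  have hj₁ : j₁ ∈ Y \ X := hYX ▸ mem_insert_self j₁ {j₂}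
  have hj₂ : j₂ ∈ Y \ X := hYX ▸ mem_insert_of_mem (mem_singleton_self j₂)
  have hne : ∀ i ∈ X \ Y, ∀ j ∈ Y \ X, i ≠ j := fun i hi j hj =>
    ne_of_mem_of_not_mem (mem_sdiff.mp hi).1 (mem_sdiff.mp hj).2
  have hK : [i₁, i₂, j₁, j₂].Nodup := by
    simp only [List.nodup_cons, List.mem_cons, List.not_mem_nil, or_false, List.nodup_nil,
      and_true, not_or, not_false_eq_true]
    exact ⟨⟨hi, hne _ hi₁ _ hj₁, hne _ hi₁ _ hj₂⟩, ⟨hne _ hi₂ _ hj₁, hne _ hi₂ _ hj₂⟩, hj⟩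
  set I := X ∩ Y
  have hI : Disjoint I {i₁, i₂, j₁, j₂} := by
    rw [show ({i₁, i₂, j₁, j₂} : Finset N) = symmDiff X Y by
      rw [symmDiff_def, sup_eq_union, hXY, hYX, insert_union, ← insert_eq]]
    exact (disjoint_symmDiff_inf X Y).symm
  have hXI : X = I ∪ {i₁, i₂} := by rw [← hXY, union_comm, sdiff_union_inter]
  have hYI : Y = I ∪ {j₁, j₂} := by
    rw [← hYX, union_comm, show I = Y ∩ X from inter_comm X Y, sdiff_union_inter]
  have hnI : ∀ {v}, v ∈ ({i₁, i₂, j₁, j₂} : Finset N) → v ∉ I := fun hv => disjoint_right.mp hI hv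
  have hA : insert j₁ (X.erase i₂) = I ∪ {i₁, j₁} := by
    rw [hXI]; exact insert_erase_union_pair (hnI (by simp)) hi
  have hB : insert j₂ (X.erase i₂) = I ∪ {i₁, j₂} := by
    rw [hXI]; exact insert_erase_union_pair (hnI (by simp)) hi
  have hC : (insert i₂ Y).erase j₂ = I ∪ {i₂, j₁} := by
    rw [hYI]
    exact erase_insert_union_pair (hnI (by simp)) hj (hne _ hi₂ _ hj₂)
  have hD : (insert i₂ Y).erase j₁ = I ∪ {i₂, j₂} := by
    rw [hYI, pair_comm]
    exact erase_insert_union_pair (hnI (by simp)) hj.symm (hne _ hi₂ _ hj₁)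
  rw [hXI] at hX
  rw [hYI] at hY
  rcases le_max_iff.mp (add_le_max_of_conj_submodular hg hsub hequi hI hK hX hY) with h | h
  · exact ⟨j₁, hj₁, by rwa [hA, hD, hXI, hYI]⟩
  · exact ⟨j₂, hj₂, by rwa [hB, hC, hXI, hYI]⟩

end Exchange

end LocalExchange

theorem local_exchange_of_conjugate_submodular_general
    {N : Type*} [Fintype N] [DecidableEq N]
    (f : Finset N → WithBot ℝ)
    (hequi : ∀ X Y : Finset N, f X ≠ ⊥ → f Y ≠ ⊥ → X.card = Y.card)
    (g : (N → ℝ) → ℝ)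
    (hg : ∀ p : N → ℝ,
      (g p : WithBot ℝ) =
        (Finset.univ : Finset (Finset N)).sup
          (fun X => f X + ((-(∑ i ∈ X, p i) : ℝ) : WithBot ℝ)))
    (hsub : ∀ p q : N → ℝ, g (p ⊔ q) + g (p ⊓ q) ≤ g p + g q) :
    ∀ X Y : Finset N, f X ≠ ⊥ → f Y ≠ ⊥ → (X \ Y).card = 2 →
      ∃ i ∈ X \ Y, ∃ j ∈ Y \ X,
        f X + f Y ≤ f (insert j (X.erase i)) + f ((insert i Y).erase j) := by
  intro X Y hX hY hXY
  obtain ⟨i₁, i₂, hi, hXY⟩ := card_eq_two.mp hXY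
  obtain ⟨j₁, j₂, hj, hYX⟩ :=
    card_eq_two.mp ((card_sdiff_comm (hequi X Y hX hY)).symm.trans (hXY ▸ card_pair hi))
  exact ⟨i₂, by simp [hXY], exists_exchange_of_conj_submodular hg hsub hequi hXY hYX hi hj hX hY⟩

/-- If `dom f` is a nonempty family of equi-cardinal sets and the conjugate
`g(p) = max { f(X) - p(X) : X ⊆ N }` is submodular, then `f` has the local
exchange property: for `X, Y ∈ dom f` with `|X \ Y| = 2` there are
`i ∈ X \ Y` and `j ∈ Y \ X` with `f(X) + f(Y) ≤ f(X - i + j) + f(Y + i - j)`. -/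
theorem local_exchange_of_conjugate_submodular
    {N : Type*} [Fintype N] [DecidableEq N] [Nonempty N]
    (f : Finset N → WithBot ℝ) (hdom : ∃ X : Finset N, f X ≠ ⊥)
    (hequi : ∀ X Y : Finset N, f X ≠ ⊥ → f Y ≠ ⊥ → X.card = Y.card)
    (g : (N → ℝ) → ℝ)
    (hg : ∀ p : N → ℝ,
      (g p : WithBot ℝ) =
        (Finset.univ : Finset (Finset N)).sup
          (fun X => f X + ((-(∑ i ∈ X, p i) : ℝ) : WithBot ℝ)))
    (hsub : ∀ p q : N → ℝ, g (p ⊔ q) + g (p ⊓ q) ≤ g p + g q) :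
    ∀ X Y : Finset N, f X ≠ ⊥ → f Y ≠ ⊥ → (X \ Y).card = 2 →
      ∃ i ∈ X \ Y, ∃ j ∈ Y \ X,
        f X + f Y ≤ f (insert j (X.erase i)) + f ((insert i Y).erase j) :=
  local_exchange_of_conjugate_submodular_general f hequi g hg hsub
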